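/- Let α ∈ ℝ, let (u, v, w) be a smooth solution of (KB) and (φ, ψ, θ) a smooth solution of the adjoint system (AKB) on ℝ². Define Cˣ = (3/2)α·uₜφu + α·uₜψv + α·uₜθw + (1/2)α·vₜψu + (1/2)α·wₜθu + (1/6)vθu + (1/4)θₓα·uₓₜ + (5/24)t·uₓθₓₓ − (5/6)t·wₜθ + α·vₜφ − (1/4)α·uₜθₓₓ − (1/4)θα·uₓₓₜ − (5/6)t·vₜψ − (5/6)t·uₜφ − (5/24)t·uₓₓθₓ + α·wₜψ + (1/4)θₓₓ − (5/6)φu − (2/3)ψv − θw + (1/3)ψu² and Cᵗ = −(3/2)αφu·uₓ − αφvₓ − αψv·uₓ − (1/2)αψu·vₓ − αψwₓ + (1/4)αθ·uₓₓₓ − αθw·uₓ − (1/2)αθu·wₓ + φ + (5/6)φt·uₓ − (2/3)ψu + (5/6)ψt·vₓ − (1/3)vθ + (5/6)θt·wₓ (subscripts denote partial derivatives). Then ∂ₓCˣ + ∂ₜCᵗ = 0 identically on ℝ². -/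

import Mathlib

/-- Partial derivative with respect to the first (space) variable. -/
noncomputable def pdx (f : ℝ → ℝ → ℝ) (x t : ℝ) : ℝ := deriv (fun y => f y t) x

/-- Partial derivative with respect to the second (time) variable. -/
noncomputable def pdt (f : ℝ → ℝ → ℝ) (x t : ℝ) : ℝ := deriv (fun s => f x s) t

/-- The three-field Kaup–Boussinesq system (KB) holds for `(u,v,w)` at the point `(x,t)`:
`∂ₜu = (3/2)u∂ₓu + ∂ₓv`, `∂ₜv = v∂ₓu + (1/2)u∂ₓv + ∂ₓw`,
`∂ₜw = −(1/4)∂ₓ³u + w∂ₓu + (1/2)u∂ₓw`. -/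
def KBAt (u v w : ℝ → ℝ → ℝ) (x t : ℝ) : Prop :=
  pdt u x t = 3/2 * u x t * pdx u x t + pdx v x t ∧
  pdt v x t = v x t * pdx u x t + 1/2 * u x t * pdx v x t + pdx w x t ∧
  pdt w x t = -(1/4) * pdx (pdx (pdx u)) x t + w x t * pdx u x t
    + 1/2 * u x t * pdx w x t

/-- `f : ℝ × ℝ → ℝ` (curried) is smooth in both variables jointly. -/
def Smooth2 (f : ℝ → ℝ → ℝ) : Prop := ContDiff ℝ (⊤ : ℕ∞) (fun p : ℝ × ℝ => f p.1 p.2)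

/-- The adjoint system (AKB) of the three-field Kaup–Boussinesq system holds for
`(φ,ψ,θ)` (relative to the fields `(u,v,w)`) at the point `(x,t)`:
`∂ₜφ = (1/2)ψ∂ₓv + (1/2)θ∂ₓw + (3/2)u∂ₓφ + v∂ₓψ + w∂ₓθ − (1/4)∂ₓ³θ`,
`∂ₜψ = ∂ₓφ + (1/2)u∂ₓψ − (1/2)ψ∂ₓu`,
`∂ₜθ = ∂ₓψ + (1/2)u∂ₓθ − (1/2)θ∂ₓu`. -/
def AKBAt (φ ψ θ u v w : ℝ → ℝ → ℝ) (x t : ℝ) : Prop :=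
  pdt φ x t = 1/2 * ψ x t * pdx v x t + 1/2 * θ x t * pdx w x t
    + 3/2 * u x t * pdx φ x t + v x t * pdx ψ x t + w x t * pdx θ x t
    - 1/4 * pdx (pdx (pdx θ)) x t ∧
  pdt ψ x t = pdx φ x t + 1/2 * u x t * pdx ψ x t - 1/2 * ψ x t * pdx u x t ∧
  pdt θ x t = pdx ψ x t + 1/2 * u x t * pdx θ x t - 1/2 * θ x t * pdx u x t


/-- The conserved current component `Cˣ` associated with the symmetry
`α·V1 + V3` via Ibragimov's conservation theorem. -/
noncomputable def Cx5 (α : ℝ) (u v w φ ψ θ : ℝ → ℝ → ℝ) (x t : ℝ) : ℝ :=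
  3/2 * α * pdt u x t * φ x t * u x t + α * pdt u x t * ψ x t * v x t
    + α * pdt u x t * θ x t * w x t + 1/2 * α * pdt v x t * ψ x t * u x t
    + 1/2 * α * pdt w x t * θ x t * u x t + 1/6 * v x t * θ x t * u x t
    + 1/4 * pdx θ x t * α * pdx (pdt u) x t
    + 5/24 * t * pdx u x t * pdx (pdx θ) x t - 5/6 * t * pdt w x t * θ x t
    + α * pdt v x t * φ x t - 1/4 * α * pdt u x t * pdx (pdx θ) x t
    - 1/4 * θ x t * α * pdx (pdx (pdt u)) x t - 5/6 * t * pdt v x t * ψ x t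
    - 5/6 * t * pdt u x t * φ x t - 5/24 * t * pdx (pdx u) x t * pdx θ x t
    + α * pdt w x t * ψ x t + 1/4 * pdx (pdx θ) x t - 5/6 * φ x t * u x t
    - 2/3 * ψ x t * v x t - θ x t * w x t + 1/3 * ψ x t * (u x t)^2

/-- The conserved current component `Cᵗ` associated with `α·V1 + V3`. -/
noncomputable def Ct5 (α : ℝ) (u v w φ ψ θ : ℝ → ℝ → ℝ) (x t : ℝ) : ℝ :=
  -(3/2) * α * φ x t * u x t * pdx u x t - α * φ x t * pdx v x t
    - α * ψ x t * v x t * pdx u x t - 1/2 * α * ψ x t * u x t * pdx v x t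
    - α * ψ x t * pdx w x t + 1/4 * α * θ x t * pdx (pdx (pdx u)) x t
    - α * θ x t * w x t * pdx u x t - 1/2 * α * θ x t * u x t * pdx w x t
    + φ x t + 5/6 * φ x t * t * pdx u x t - 2/3 * ψ x t * u x t
    + 5/6 * ψ x t * t * pdx v x t - 1/3 * v x t * θ x t
    + 5/6 * θ x t * t * pdx w x t

namespace Playground

variable {f g : ℝ → ℝ → ℝ} {c x t : ℝ}

noncomputable def unc (f : ℝ → ℝ → ℝ) : ℝ × ℝ → ℝ := fun p => f p.1 p.2

theorem pdx_eq_fderiv (hf : Smooth2 f) (x t : ℝ) :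
    pdx f x t = fderiv ℝ (unc f) (x, t) (1, 0) := by
  have h : HasDerivAt (fun y => f y t) (fderiv ℝ (unc f) (x, t) (1, 0)) x := by
    have := ((hf.differentiable (by simp) (x, t)).hasFDerivAt).comp_hasDerivAt x
      (HasDerivAt.prodMk (hasDerivAt_id x) (hasDerivAt_const x t)); exact this
  exact h.deriv

theorem pdt_eq_fderiv (hf : Smooth2 f) (x t : ℝ) :
    pdt f x t = fderiv ℝ (unc f) (x, t) (0, 1) := by
  have h : HasDerivAt (fun s => f x s) (fderiv ℝ (unc f) (x, t) (0, 1)) t :=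
    ((hf.differentiable (by simp) (x, t)).hasFDerivAt).comp_hasDerivAt t
      (HasDerivAt.prodMk (hasDerivAt_const t x) (hasDerivAt_id t))
  exact h.deriv

theorem hasDx (hf : Smooth2 f) (x t : ℝ) :
    HasDerivAt (fun y => f y t) (pdx f x t) x := by
  rw [pdx_eq_fderiv hf]
  exact ((hf.differentiable (by simp) (x, t)).hasFDerivAt).comp_hasDerivAt x
      (HasDerivAt.prodMk (hasDerivAt_id x) (hasDerivAt_const x t))

theorem hasDt (hf : Smooth2 f) (x t : ℝ) :
    HasDerivAt (fun s => f x s) (pdt f x t) t := by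
  rw [pdt_eq_fderiv hf]
  exact ((hf.differentiable (by simp) (x, t)).hasFDerivAt).comp_hasDerivAt t
      (HasDerivAt.prodMk (hasDerivAt_const t x) (hasDerivAt_id t))

theorem smooth2_pdx (hf : Smooth2 f) : Smooth2 (pdx f) := by
  have hA : ContDiff ℝ (⊤ : ℕ∞) (fderiv ℝ (unc f)) := hf.fderiv_right (by simp)
  have : (fun p : ℝ × ℝ => pdx f p.1 p.2) = fun p => fderiv ℝ (unc f) p (1, 0) :=
    funext fun p => pdx_eq_fderiv hf p.1 p.2
  show ContDiff ℝ (⊤ : ℕ∞) (fun p : ℝ × ℝ => pdx f p.1 p.2)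
  rw [this]
  exact hA.clm_apply contDiff_const

theorem smooth2_pdt (hf : Smooth2 f) : Smooth2 (pdt f) := by
  have hA : ContDiff ℝ (⊤ : ℕ∞) (fderiv ℝ (unc f)) := hf.fderiv_right (by simp)
  have : (fun p : ℝ × ℝ => pdt f p.1 p.2) = fun p => fderiv ℝ (unc f) p (0, 1) :=
    funext fun p => pdt_eq_fderiv hf p.1 p.2
  show ContDiff ℝ (⊤ : ℕ∞) (fun p : ℝ × ℝ => pdt f p.1 p.2)
  rw [this]
  exact hA.clm_apply contDiff_const

theorem pdtx_comm (hf : Smooth2 f) : pdt (pdx f) = pdx (pdt f) := by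
  funext x t
  set A := fderiv ℝ (unc f) with hAdef
  have hA : ContDiff ℝ (⊤ : ℕ∞) A := hf.fderiv_right (by simp)
  have hA' : HasFDerivAt A (fderiv ℝ A (x, t)) (x, t) :=
    (hA.differentiable (by simp) (x, t)).hasFDerivAt
  -- LHS
  have l1 : HasDerivAt (fun s => A (x, s)) (fderiv ℝ A (x, t) (0, 1)) t :=
    hA'.comp_hasDerivAt t (HasDerivAt.prodMk (hasDerivAt_const t x) (hasDerivAt_id t))
  have l2 : HasDerivAt (fun s => A (x, s) (1, 0)) (fderiv ℝ A (x, t) (0, 1) (1, 0)) t := by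
    simpa using l1.clm_apply (hasDerivAt_const t ((1 : ℝ), (0 : ℝ)))
  have hL : pdt (pdx f) x t = fderiv ℝ A (x, t) (0, 1) (1, 0) := by
    have : (fun s => pdx f x s) = fun s => A (x, s) (1, 0) :=
      funext fun s => pdx_eq_fderiv hf x s
    show deriv (fun s => pdx f x s) t = _
    rw [this]
    exact l2.deriv
  -- RHS
  have r1 : HasDerivAt (fun y => A (y, t)) (fderiv ℝ A (x, t) (1, 0)) x :=
    hA'.comp_hasDerivAt x (HasDerivAt.prodMk (hasDerivAt_id x) (hasDerivAt_const x t))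
  have r2 : HasDerivAt (fun y => A (y, t) (0, 1)) (fderiv ℝ A (x, t) (1, 0) (0, 1)) x := by
    simpa using r1.clm_apply (hasDerivAt_const x ((0 : ℝ), (1 : ℝ)))
  have hR : pdx (pdt f) x t = fderiv ℝ A (x, t) (1, 0) (0, 1) := by
    have : (fun y => pdt f y t) = fun y => A (y, t) (0, 1) :=
      funext fun y => pdt_eq_fderiv hf y t
    show deriv (fun y => pdt f y t) x = _
    rw [this]
    exact r2.deriv
  rw [hL, hR]
  exact second_derivative_symmetric
    (fun y => (hf.differentiable (by simp) y).hasFDerivAt) hA' _ _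

end Playground

namespace Playground

variable {f g : ℝ → ℝ → ℝ} {c x t : ℝ}

theorem smooth2_add (hf : Smooth2 f) (hg : Smooth2 g) :
    Smooth2 (fun x t => f x t + g x t) := hf.add hg

theorem smooth2_sub (hf : Smooth2 f) (hg : Smooth2 g) :
    Smooth2 (fun x t => f x t - g x t) := hf.sub hg

theorem smooth2_mul (hf : Smooth2 f) (hg : Smooth2 g) :
    Smooth2 (fun x t => f x t * g x t) := hf.mul hg

theorem smooth2_const : Smooth2 (fun _ _ => c) := contDiff_const

theorem smooth2_tv : Smooth2 (fun _ t => t) := contDiff_snd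

theorem pdx_fadd (hf : Smooth2 f) (hg : Smooth2 g) :
    pdx (fun x t => f x t + g x t) = fun x t => pdx f x t + pdx g x t :=
  funext fun x => funext fun t => ((hasDx hf x t).add (hasDx hg x t)).deriv

theorem pdx_fsub (hf : Smooth2 f) (hg : Smooth2 g) :
    pdx (fun x t => f x t - g x t) = fun x t => pdx f x t - pdx g x t :=
  funext fun x => funext fun t => ((hasDx hf x t).sub (hasDx hg x t)).deriv

theorem pdx_fmul (hf : Smooth2 f) (hg : Smooth2 g) :
    pdx (fun x t => f x t * g x t) = fun x t => pdx f x t * g x t + f x t * pdx g x t :=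
  funext fun x => funext fun t => ((hasDx hf x t).mul (hasDx hg x t)).deriv

theorem pdx_fconst : pdx (fun _ _ => c) = fun _ _ => (0 : ℝ) :=
  funext fun x => funext fun _ => (hasDerivAt_const x c).deriv

theorem pdx_ftv : pdx (fun _ t => t) = fun _ _ => (0 : ℝ) :=
  funext fun x => funext fun t => (hasDerivAt_const x t).deriv

theorem pdt_fadd (hf : Smooth2 f) (hg : Smooth2 g) :
    pdt (fun x t => f x t + g x t) = fun x t => pdt f x t + pdt g x t :=
  funext fun x => funext fun t => ((hasDt hf x t).add (hasDt hg x t)).deriv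

theorem pdt_fsub (hf : Smooth2 f) (hg : Smooth2 g) :
    pdt (fun x t => f x t - g x t) = fun x t => pdt f x t - pdt g x t :=
  funext fun x => funext fun t => ((hasDt hf x t).sub (hasDt hg x t)).deriv

theorem pdt_fmul (hf : Smooth2 f) (hg : Smooth2 g) :
    pdt (fun x t => f x t * g x t) = fun x t => pdt f x t * g x t + f x t * pdt g x t :=
  funext fun x => funext fun t => ((hasDt hf x t).mul (hasDt hg x t)).deriv

theorem pdt_fconst : pdt (fun _ _ => c) = fun _ _ => (0 : ℝ) :=
  funext fun _ => funext fun t => (hasDerivAt_const t c).deriv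

theorem pdt_ftv : pdt (fun _ t => t) = fun _ _ => (1 : ℝ) :=
  funext fun _ => funext fun t => (hasDerivAt_id t).deriv

end Playground

open Playground

/-- `(Cˣ, Cᵗ)` is a conserved current: `∂ₓCˣ + ∂ₜCᵗ = 0` on ℝ². -/
theorem stmt_19 (α : ℝ) (u v w φ ψ θ : ℝ → ℝ → ℝ)
    (hu : Smooth2 u) (hv : Smooth2 v) (hw : Smooth2 w)
    (hφ : Smooth2 φ) (hψ : Smooth2 ψ) (hθ : Smooth2 θ)
    (hKB : ∀ x t : ℝ, KBAt u v w x t)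
    (hAKB : ∀ x t : ℝ, AKBAt φ ψ θ u v w x t) :
    ∀ x t : ℝ, pdx (Cx5 α u v w φ ψ θ) x t + pdt (Ct5 α u v w φ ψ θ) x t = 0 := by
  have h1 : pdt u = fun x t => 3/2 * u x t * pdx u x t + pdx v x t :=
    funext fun a => funext fun b => (hKB a b).1
  have h2 : pdt v = fun x t => v x t * pdx u x t + 1/2 * u x t * pdx v x t + pdx w x t :=
    funext fun a => funext fun b => (hKB a b).2.1
  have h3 : pdt w = fun x t => -(1/4) * pdx (pdx (pdx u)) x t + w x t * pdx u x t
      + 1/2 * u x t * pdx w x t :=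
    funext fun a => funext fun b => (hKB a b).2.2
  have a1 : pdt φ = fun x t => 1/2 * ψ x t * pdx v x t + 1/2 * θ x t * pdx w x t
      + 3/2 * u x t * pdx φ x t + v x t * pdx ψ x t + w x t * pdx θ x t
      - 1/4 * pdx (pdx (pdx θ)) x t :=
    funext fun a => funext fun b => (hAKB a b).1
  have a2 : pdt ψ = fun x t => pdx φ x t + 1/2 * u x t * pdx ψ x t - 1/2 * ψ x t * pdx u x t :=
    funext fun a => funext fun b => (hAKB a b).2.1
  have a3 : pdt θ = fun x t => pdx ψ x t + 1/2 * u x t * pdx θ x t - 1/2 * θ x t * pdx u x t :=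
    funext fun a => funext fun b => (hAKB a b).2.2
  intro x t
  rw [show Cx5 α u v w φ ψ θ = fun x t =>
    3/2 * α * pdt u x t * φ x t * u x t + α * pdt u x t * ψ x t * v x t
    + α * pdt u x t * θ x t * w x t + 1/2 * α * pdt v x t * ψ x t * u x t
    + 1/2 * α * pdt w x t * θ x t * u x t + 1/6 * v x t * θ x t * u x t
    + 1/4 * pdx θ x t * α * pdx (pdt u) x t
    + 5/24 * t * pdx u x t * pdx (pdx θ) x t - 5/6 * t * pdt w x t * θ x t
    + α * pdt v x t * φ x t - 1/4 * α * pdt u x t * pdx (pdx θ) x t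
    - 1/4 * θ x t * α * pdx (pdx (pdt u)) x t - 5/6 * t * pdt v x t * ψ x t
    - 5/6 * t * pdt u x t * φ x t - 5/24 * t * pdx (pdx u) x t * pdx θ x t
    + α * pdt w x t * ψ x t + 1/4 * pdx (pdx θ) x t - 5/6 * φ x t * u x t
    - 2/3 * ψ x t * v x t - θ x t * w x t + 1/3 * ψ x t * (u x t)^2 from rfl,
    show Ct5 α u v w φ ψ θ = fun x t =>
    -(3/2) * α * φ x t * u x t * pdx u x t - α * φ x t * pdx v x t
    - α * ψ x t * v x t * pdx u x t - 1/2 * α * ψ x t * u x t * pdx v x t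
    - α * ψ x t * pdx w x t + 1/4 * α * θ x t * pdx (pdx (pdx u)) x t
    - α * θ x t * w x t * pdx u x t - 1/2 * α * θ x t * u x t * pdx w x t
    + φ x t + 5/6 * φ x t * t * pdx u x t - 2/3 * ψ x t * u x t
    + 5/6 * ψ x t * t * pdx v x t - 1/3 * v x t * θ x t
    + 5/6 * θ x t * t * pdx w x t from rfl]
  simp only [pow_two]
  simp (config := { maxDischargeDepth := 200 }) only [h1, h2, h3, a1, a2, a3, pdtx_comm, pdx_fadd, pdx_fsub, pdx_fmul, pdx_fconst,
    pdx_ftv, pdt_fadd, pdt_fsub, pdt_fmul, pdt_fconst, pdt_ftv,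
    smooth2_add, smooth2_sub, smooth2_mul, smooth2_const, smooth2_tv,
    smooth2_pdx, smooth2_pdt, hu, hv, hw, hφ, hψ, hθ]
  ring
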